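/- Let L be an admissible list (every entry ≥ 2) written as L = A ++ (a :: B) for lists A, B and an integer a. Then d(A) + d(B) ≤ d(L), and if equality holds for some such decomposition then every entry of L equals 2 (and then equality holds for every decomposition). (This says that the coefficients m_i of the bark Bk(T) of an admissible chain T satisfy 0 < m_i ≤ 1, with m_i = 1 for some i only when T consists of (−2)-curves.) -/
import Mathlib

def disc : List ℤ → ℤ
  | [] => 1
  | [a] => a
  | a :: b :: L => a * disc (b :: L) - disc L

/-- `tld L = disc (L.tail)` for nonempty `L`, and `0` for `[]`. -/
def tld : List ℤ → ℤ
  | [] => 0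
  | _ :: M => disc M

/-- `ldd A = disc (A.dropLast)` for nonempty `A`, and `0` for `[]`. -/
def ldd : List ℤ → ℤ
  | [] => 0
  | a :: A => disc ((a :: A).dropLast)

lemma disc_cons (x : ℤ) (M : List ℤ) : disc (x :: M) = x * disc M - tld M := by
  cases M <;> simp [disc, tld]

/-- positivity and the left gap estimate. -/
lemma disc_pos_gap : ∀ L : List ℤ, (∀ x ∈ L, 2 ≤ x) →
    1 ≤ disc L ∧ ∀ a : ℤ, 2 ≤ a → disc L + 1 ≤ disc (a :: L) := by
  intro L
  induction L with
  | nil =>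
    intro _
    refine ⟨le_refl 1, fun a ha => ?_⟩
    simpa [disc] using ha
  | cons x M ih =>
    intro h
    have hx : 2 ≤ x := h x (by simp)
    have hM := ih (fun y hy => h y (by simp [hy]))
    have h1 : disc M + 1 ≤ disc (x :: M) := hM.2 x hx
    have hpos : 1 ≤ disc (x :: M) := by linarith [hM.1]
    refine ⟨hpos, fun a ha => ?_⟩
    have he : disc (a :: x :: M) = a * disc (x :: M) - disc M := rfl
    nlinarith [mul_nonneg (by linarith : (0:ℤ) ≤ a - 2) (by linarith : (0:ℤ) ≤ disc (x :: M))]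

lemma gap_eq_forward : ∀ L : List ℤ, (∀ x ∈ L, 2 ≤ x) → ∀ a : ℤ, 2 ≤ a →
    disc (a :: L) = disc L + 1 → a = 2 ∧ ∀ x ∈ L, x = 2 := by
  intro L
  induction L with
  | nil =>
    intro _ a _ heq
    have : a = 2 := by simpa [disc] using heq
    exact ⟨this, by simp⟩
  | cons b M ih =>
    intro h a ha heq
    have hb : 2 ≤ b := h b (by simp)
    have hMadm : ∀ y ∈ M, 2 ≤ y := fun y hy => h y (by simp [hy])
    have hM := disc_pos_gap M hMadm
    have hgap : disc M + 1 ≤ disc (b :: M) := hM.2 b hb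
    have hpos : 1 ≤ disc (b :: M) := by linarith [hM.1]
    have he : disc (a :: b :: M) = a * disc (b :: M) - disc M := rfl
    have hsum : (a - 2) * disc (b :: M) + (disc (b :: M) - disc M - 1) = 0 := by
      linear_combination heq - he
    have ht1 : 0 ≤ (a - 2) * disc (b :: M) :=
      mul_nonneg (by linarith) (by linarith)
    have ht2 : 0 ≤ disc (b :: M) - disc M - 1 := by linarith
    have hz1 : (a - 2) * disc (b :: M) = 0 := by linarith
    have ha2 : a = 2 := by
      rcases mul_eq_zero.1 hz1 with h' | h'
      · linarith
      · linarith
    have hz2 : disc (b :: M) = disc M + 1 := by linarith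
    obtain ⟨hb2, hM2⟩ := ih hMadm b hb hz2
    refine ⟨ha2, fun x hx => ?_⟩
    rcases List.mem_cons.1 hx with h' | h'
    · exact h' ▸ hb2
    · exact hM2 x h'

lemma ldd_cons_cons (x y : ℤ) (A : List ℤ) :
    ldd (x :: y :: A) = x * ldd (y :: A) - ldd A := by
  cases A with
  | nil => simp [ldd, disc]
  | cons z M => simp [ldd, disc, List.dropLast]

lemma key : ∀ (A : List ℤ) (a : ℤ) (B : List ℤ),
    disc (A ++ a :: B) = disc A * disc (a :: B) - ldd A * disc B := by
  intro A
  induction A using disc.induct with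
  | case1 => intro a B; simp [disc, ldd]
  | case2 x =>
    intro a B
    have h : disc ([x] ++ a :: B) = x * disc (a :: B) - disc B := rfl
    simp only [h, ldd, disc, List.dropLast]
    ring
  | case3 x y A ih1 ih2 =>
    intro a B
    have h : disc (x :: (y :: A ++ a :: B))
        = x * disc (y :: A ++ a :: B) - disc (A ++ a :: B) := rfl
    rw [List.cons_append, h, ih1, ih2, ldd_cons_cons]
    have hd : disc (x :: y :: A) = x * disc (y :: A) - disc A := rfl
    rw [hd]; ring

lemma ldd_concat (A : List ℤ) (a : ℤ) : ldd (A ++ [a]) = disc A := by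
  cases A with
  | nil => simp [ldd, disc]
  | cons x M =>
    have h : ldd ((x :: M) ++ [a]) = disc (((x :: M) ++ [a]).dropLast) := by
      rw [List.cons_append]; rfl
    rw [h, List.dropLast_concat]

lemma rgap : ∀ A : List ℤ, (∀ x ∈ A, 2 ≤ x) → 1 ≤ disc A - ldd A := by
  intro A
  induction A using List.reverseRecOn with
  | nil => intro _; simp [disc, ldd]
  | append_singleton A' a ih =>
    intro h
    have ha : 2 ≤ a := h a (by simp)
    have hA' : ∀ x ∈ A', 2 ≤ x := fun x hx => h x (by simp [hx])
    have hpos := (disc_pos_gap A' hA').1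
    have hih := ih hA'
    have hk : disc (A' ++ [a]) = disc A' * a - ldd A' := by
      have := key A' a []
      simpa [disc] using this
    rw [hk, ldd_concat]
    nlinarith [mul_nonneg (by linarith : (0:ℤ) ≤ a - 2) (by linarith : (0:ℤ) ≤ disc A')]

lemma rgap_eq_forward : ∀ A : List ℤ, (∀ x ∈ A, 2 ≤ x) →
    disc A - ldd A = 1 → ∀ x ∈ A, x = 2 := by
  intro A
  induction A using List.reverseRecOn with
  | nil => intro _ _ x hx; simp at hx
  | append_singleton A' a ih =>
    intro h heq
    have ha : 2 ≤ a := h a (by simp)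
    have hA' : ∀ x ∈ A', 2 ≤ x := fun x hx => h x (by simp [hx])
    have hpos := (disc_pos_gap A' hA').1
    have hih := rgap A' hA'
    have hk : disc (A' ++ [a]) = disc A' * a - ldd A' := by
      have := key A' a []
      simpa [disc] using this
    rw [hk, ldd_concat] at heq
    have hsum : (a - 2) * disc A' + (disc A' - ldd A' - 1) = 0 := by
      linear_combination heq
    have ht1 : 0 ≤ (a - 2) * disc A' := mul_nonneg (by linarith) (by linarith)
    have hz1 : (a - 2) * disc A' = 0 := by linarith
    have ha2 : a = 2 := by
      rcases mul_eq_zero.1 hz1 with h' | h' <;> linarith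
    have hz2 : disc A' - ldd A' = 1 := by linarith
    intro x hx
    rcases List.mem_append.1 hx with h' | h'
    · exact ih hA' hz2 x h'
    · simp at h'; exact h' ▸ ha2

lemma disc_all2 : ∀ L : List ℤ, (∀ x ∈ L, x = 2) →
    disc L = L.length + 1 ∧ tld L = L.length := by
  intro L
  induction L with
  | nil => intro _; simp [disc, tld]
  | cons x M ih =>
    intro h
    have hx : x = 2 := h x (by simp)
    obtain ⟨h1, h2⟩ := ih (fun y hy => h y (by simp [hy]))
    constructor
    · rw [disc_cons, h1, h2, hx]; simp; ring
    · simp [tld, h1]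

theorem bark_coefficient_le_one (L : List ℤ) (hadm : ∀ a ∈ L, 2 ≤ a) :
    (∀ (A : List ℤ) (a : ℤ) (B : List ℤ), L = A ++ a :: B →
      disc A + disc B ≤ disc L) ∧
    ((∃ (A : List ℤ) (a : ℤ) (B : List ℤ), L = A ++ a :: B ∧
        disc A + disc B = disc L) →
      (∀ b ∈ L, b = 2) ∧
      ∀ (A : List ℤ) (a : ℤ) (B : List ℤ), L = A ++ a :: B →
        disc A + disc B = disc L) := by
  constructor
  · intro A a B hL
    subst hL
    have hA : ∀ x ∈ A, 2 ≤ x := fun x hx => hadm x (by simp [hx])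
    have hB : ∀ x ∈ B, 2 ≤ x := fun x hx => hadm x (by simp [hx])
    have ha : 2 ≤ a := hadm a (by simp)
    have hk := key A a B
    have hgB := (disc_pos_gap B hB).2 a ha
    have hpB := (disc_pos_gap B hB).1
    have hpA := (disc_pos_gap A hA).1
    have hrA := rgap A hA
    rw [hk]
    nlinarith [mul_nonneg (by linarith : (0:ℤ) ≤ disc A - 1) (by linarith : (0:ℤ) ≤ disc (a :: B) - disc B - 1),
      mul_nonneg (by linarith : (0:ℤ) ≤ disc B - 1) (by linarith : (0:ℤ) ≤ disc A - ldd A - 1),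
      mul_nonneg (by linarith : (0:ℤ) ≤ disc A - 1) (by linarith : (0:ℤ) ≤ disc B - 1)]
  · rintro ⟨A, a, B, hL, heq⟩
    have hA : ∀ x ∈ A, 2 ≤ x := fun x hx => hadm x (by rw [hL]; simp [hx])
    have hB : ∀ x ∈ B, 2 ≤ x := fun x hx => hadm x (by rw [hL]; simp [hx])
    have ha : 2 ≤ a := hadm a (by rw [hL]; simp)
    have hk := key A a B
    have hgB := (disc_pos_gap B hB).2 a ha
    have hpB := (disc_pos_gap B hB).1
    have hpA := (disc_pos_gap A hA).1
    have hrA := rgap A hA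
    rw [hL] at heq
    rw [hk] at heq
    -- disc A + disc B = disc A * disc (a::B) - ldd A * disc B
    have ht1 : 0 ≤ disc A * (disc (a :: B) - disc B - 1) :=
      mul_nonneg (by linarith) (by linarith)
    have ht2 : 0 ≤ disc B * (disc A - ldd A - 1) :=
      mul_nonneg (by linarith) (by linarith)
    have hsum : disc A * (disc (a :: B) - disc B - 1) + disc B * (disc A - ldd A - 1) = 0 := by
      linear_combination -heq
    have hz1 : disc A * (disc (a :: B) - disc B - 1) = 0 := by linarith
    have hz2 : disc B * (disc A - ldd A - 1) = 0 := by linarith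
    have hgBe : disc (a :: B) = disc B + 1 := by
      rcases mul_eq_zero.1 hz1 with h' | h' <;> [linarith; linarith]
    have hrAe : disc A - ldd A = 1 := by
      rcases mul_eq_zero.1 hz2 with h' | h' <;> [linarith; linarith]
    obtain ⟨ha2, hB2⟩ := gap_eq_forward B hB a ha hgBe
    have hA2 : ∀ x ∈ A, x = 2 := rgap_eq_forward A hA hrAe
    have hall : ∀ b ∈ L, b = 2 := by
      intro b hb
      rw [hL] at hb
      rcases List.mem_append.1 hb with h' | h'
      · exact hA2 b h'
      · rcases List.mem_cons.1 h' with h'' | h''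
        · exact h'' ▸ ha2
        · exact hB2 b h''
    refine ⟨hall, ?_⟩
    intro A' a' B' hL'
    have hA'2 : ∀ x ∈ A', x = 2 := fun x hx => hall x (by rw [hL']; simp [hx])
    have hB'2 : ∀ x ∈ B', x = 2 := fun x hx => hall x (by rw [hL']; simp [hx])
    have hL2 : ∀ x ∈ L, x = 2 := hall
    have h1 := (disc_all2 A' hA'2).1
    have h2 := (disc_all2 B' hB'2).1
    have h3 := (disc_all2 L hL2).1
    rw [h1, h2, h3, hL']
    simp [List.length_append]
    ring
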